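/- arXiv:2411.04392 — 2 statements merged into one kernel-verified Lean document; each statement's English description precedes it below -/
import Mathlib

section
/- (Robust Berge argmax Hölder bound) Under the hypotheses of the robust Berge theorem — f : A × B → ℝ continuous, μ-strongly concave in b for each a, L-Lipschitz on A × B, and g : A ⇉ B an L'-Hausdorff-Lipschitz, nonempty, convex, compact-valued correspondence — the argmax map g*(a) = argmax_{b∈g(a)} f(a,b) is single-valued and satisfies ‖g*(a₁) − g*(a₂)‖ ≤ (L' + 2·√(4/μ)·√(L + L·L'))·max{‖a₁−a₂‖^{1/2}, ‖a₁−a₂‖} for all a₁, a₂ ∈ A. -/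
/-!
Let `b₁` maximize `f a₁` on `g a₁` and `b₂` maximize `f a₂` on `g a₂`, and put `δ = ‖a₁ - a₂‖`.
The Hausdorff bound provides `b₂' ∈ g a₁` within `L'δ` of `b₂` and `b₁' ∈ g a₂` within `L'δ`
of `b₁`. Comparing values through `f a₂ b₁' ≤ f a₂ b₂` and the Lipschitz bound gives
`f a₁ b₁ - f a₁ b₂' ≤ 2(L + LL')δ`, while strong concavity makes a maximizer grow quadratically:
`(μ/4)‖b₁ - b₂'‖² ≤ f a₁ b₁ - f a₁ b₂'`. Hence `‖b₁ - b₂'‖ = O(√δ)`, and the triangle inequality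
through `b₂'` adds the `L'δ` term.
-/

open Metric

theorem strongConcaveOn_of_forall_le {E : Type*} [NormedAddCommGroup E] [NormedSpace ℝ E]
    {s : Set E} {m : ℝ} {φ : E → ℝ} (hs : Convex ℝ s)
    (h : ∀ x ∈ s, ∀ y ∈ s, ∀ l : ℝ, 0 ≤ l → l ≤ 1 →
      l * φ x + (1 - l) * φ y + m / 2 * (l * (1 - l)) * ‖x - y‖ ^ 2 ≤ φ (l • x + (1 - l) • y)) :
    StrongConcaveOn s m φ := by
  refine ⟨hs, fun x hx y hy a b ha hb hab => ?_⟩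
  obtain rfl : b = 1 - a := by linarith
  simpa only [smul_eq_mul, mul_assoc, mul_comm (m / 2)] using h x hx y hy a ha (by linarith)

theorem StrongConcaveOn.mul_sq_norm_sub_le_of_isMaxOn {E : Type*} [NormedAddCommGroup E]
    [NormedSpace ℝ E] {s : Set E} {m : ℝ} {φ : E → ℝ} {x y : E} (hφ : StrongConcaveOn s m φ)
    (hmax : IsMaxOn φ s x) (hx : x ∈ s) (hy : y ∈ s) :
    m / 4 * ‖x - y‖ ^ 2 ≤ φ x - φ y := by
  have hhalf : (1 / 2 : ℝ) + 1 / 2 = 1 := by norm_num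
  have hmid := hφ.2 hx hy (by norm_num) (by norm_num) hhalf
  have hle : φ ((1 / 2 : ℝ) • x + (1 / 2 : ℝ) • y) ≤ φ x :=
    hmax (hφ.1 hx hy (by norm_num) (by norm_num) hhalf)
  simp only [smul_eq_mul] at hmid
  linarith

theorem Metric.exists_mem_dist_le_of_hausdorffDist_le {α : Type*} [PseudoMetricSpace α]
    {s t : Set α} {x : α} {r : ℝ} (hx : x ∈ s) (hs : Bornology.IsBounded s) (ht : IsCompact t)
    (ht₀ : t.Nonempty) (h : hausdorffDist s t ≤ r) : ∃ y ∈ t, dist x y ≤ r := by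
  obtain ⟨y, hy, hxy⟩ := ht.exists_infDist_eq_dist ht₀ x
  have hfin := hausdorffEDist_ne_top_of_nonempty_of_bounded ⟨x, hx⟩ ht₀ hs ht.isBounded
  exact ⟨y, hy, hxy ▸ (infDist_le_hausdorffDist_of_mem hx hfin).trans h⟩

theorem le_two_mul_sqrt_mul_sqrt_mul_sqrt_of_sq_le {t μ K δ : ℝ} (hμ : 0 < μ) (hK : 0 ≤ K)
    (hδ : 0 ≤ δ) (h : t ^ 2 ≤ 8 / μ * (K * δ)) :
    t ≤ 2 * √(4 / μ) * √K * √δ := by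
  have hnonneg : 0 ≤ 8 / μ * (K * δ) := mul_nonneg (by positivity) (mul_nonneg hK hδ)
  have h16 : t ^ 2 ≤ 2 ^ 2 * (4 / μ) * K * δ :=
    calc t ^ 2 ≤ 8 / μ * (K * δ) := h
      _ ≤ 2 * (8 / μ * (K * δ)) := by linarith
      _ = 2 ^ 2 * (4 / μ) * K * δ := by ring
  calc t ≤ |t| := le_abs_self t
    _ ≤ √(2 ^ 2 * (4 / μ) * K * δ) := Real.abs_le_sqrt h16
    _ = 2 * √(4 / μ) * √K * √δ := by
      rw [Real.sqrt_mul (by positivity), Real.sqrt_mul (by positivity),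
        Real.sqrt_mul (by positivity), Real.sqrt_sq (by norm_num)]

theorem robust_berge_argmax_holder_general (n m : ℕ)
    (A : Set (EuclideanSpace ℝ (Fin n))) (B : Set (EuclideanSpace ℝ (Fin m)))
    (f : EuclideanSpace ℝ (Fin n) → EuclideanSpace ℝ (Fin m) → ℝ)
    (g : EuclideanSpace ℝ (Fin n) → Set (EuclideanSpace ℝ (Fin m)))
    (μ L L' : ℝ) (hμ : 0 < μ) (hL : 0 ≤ L) (hL' : 0 ≤ L')
    (hconc : ∀ a ∈ A, ∀ x ∈ B, ∀ y ∈ B, ∀ l : ℝ, 0 ≤ l → l ≤ 1 →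
      l * f a x + (1 - l) * f a y + μ / 2 * (l * (1 - l)) * ‖x - y‖ ^ 2
        ≤ f a (l • x + (1 - l) • y))
    (hf : ∀ a1 ∈ A, ∀ a2 ∈ A, ∀ b1 ∈ B, ∀ b2 ∈ B,
      |f a1 b1 - f a2 b2| ≤ L * (‖a1 - a2‖ + ‖b1 - b2‖))
    (hg : ∀ a ∈ A, (g a).Nonempty ∧ Convex ℝ (g a) ∧ IsCompact (g a) ∧ g a ⊆ B)
    (hH : ∀ a1 ∈ A, ∀ a2 ∈ A, Metric.hausdorffDist (g a1) (g a2) ≤ L' * ‖a1 - a2‖) :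
    ∀ a1 ∈ A, ∀ a2 ∈ A, ∀ b1 ∈ g a1, ∀ b2 ∈ g a2,
      (∀ b ∈ g a1, f a1 b ≤ f a1 b1) → (∀ b ∈ g a2, f a2 b ≤ f a2 b2) →
      ‖b1 - b2‖ ≤ (L' + 2 * Real.sqrt (4 / μ) * Real.sqrt (L + L * L')) *
        max (Real.sqrt ‖a1 - a2‖) ‖a1 - a2‖ := by
  intro a1 ha1 a2 ha2 b1 hb1 b2 hb2 hmax1 hmax2
  obtain ⟨hne1, hconv1, hcomp1, hsub1⟩ := hg a1 ha1
  obtain ⟨hne2, -, hcomp2, hsub2⟩ := hg a2 ha2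
  set δ := ‖a1 - a2‖
  obtain ⟨b2', hb2', hd2⟩ := exists_mem_dist_le_of_hausdorffDist_le hb2 hcomp2.isBounded hcomp1
    hne1 (hausdorffDist_comm.trans_le (hH a1 ha1 a2 ha2))
  obtain ⟨b1', hb1', hd1⟩ := exists_mem_dist_le_of_hausdorffDist_le hb1 hcomp1.isBounded hcomp2
    hne2 (hH a1 ha1 a2 ha2)
  rw [dist_eq_norm] at hd1
  rw [dist_comm, dist_eq_norm] at hd2
  have hgap : f a1 b1 - f a1 b2' ≤ 2 * ((L + L * L') * δ) := by
    have h1 := (le_abs_self _).trans (hf a1 ha1 a2 ha2 b1 (hsub1 hb1) b1' (hsub2 hb1'))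
    have h2 := (neg_le_abs _).trans (hf a1 ha1 a2 ha2 b2' (hsub1 hb2') b2 (hsub2 hb2))
    linarith [hmax2 b1' hb1', mul_le_mul_of_nonneg_left hd1 hL, mul_le_mul_of_nonneg_left hd2 hL]
  have hgrowth := (strongConcaveOn_of_forall_le hconv1 fun x hx y hy =>
    hconc a1 ha1 x (hsub1 hx) y (hsub1 hy)).mul_sq_norm_sub_le_of_isMaxOn hmax1 hb1 hb2'
  have hclose : ‖b1 - b2'‖ ≤ 2 * √(4 / μ) * √(L + L * L') * √δ :=
    le_two_mul_sqrt_mul_sqrt_mul_sqrt_of_sq_le hμ (by positivity) (norm_nonneg _)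
      (by rw [div_mul_eq_mul_div, le_div_iff₀ hμ]; linarith)
  calc ‖b1 - b2‖ ≤ ‖b1 - b2'‖ + ‖b2' - b2‖ := norm_sub_le_norm_sub_add_norm_sub ..
    _ ≤ 2 * √(4 / μ) * √(L + L * L') * √δ + L' * δ := add_le_add hclose hd2
    _ ≤ 2 * √(4 / μ) * √(L + L * L') * max √δ δ + L' * max √δ δ := by
      gcongr
      exacts [le_max_left _ _, le_max_right _ _]
    _ = _ := by ring

/-- Robust Berge argmax Hölder bound: under the hypotheses of the robust Berge maximum
theorem, maximizers of `f a` over `g a` satisfy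
`‖g*(a₁) − g*(a₂)‖ ≤ (L' + 2√(4/μ)√(L + L·L'))·max{‖a₁−a₂‖^{1/2}, ‖a₁−a₂‖}`. -/
theorem robust_berge_argmax_holder (n m : ℕ)
    (A : Set (EuclideanSpace ℝ (Fin n))) (B : Set (EuclideanSpace ℝ (Fin m)))
    (f : EuclideanSpace ℝ (Fin n) → EuclideanSpace ℝ (Fin m) → ℝ)
    (g : EuclideanSpace ℝ (Fin n) → Set (EuclideanSpace ℝ (Fin m)))
    (μ L L' : ℝ) (hμ : 0 < μ) (hL : 0 ≤ L) (hL' : 0 ≤ L')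
    (hfc : Continuous fun p : EuclideanSpace ℝ (Fin n) × EuclideanSpace ℝ (Fin m) =>
      f p.1 p.2)
    (hconc : ∀ a ∈ A, ∀ x ∈ B, ∀ y ∈ B, ∀ l : ℝ, 0 ≤ l → l ≤ 1 →
      l * f a x + (1 - l) * f a y + μ / 2 * (l * (1 - l)) * ‖x - y‖ ^ 2
        ≤ f a (l • x + (1 - l) • y))
    (hf : ∀ a1 ∈ A, ∀ a2 ∈ A, ∀ b1 ∈ B, ∀ b2 ∈ B,
      |f a1 b1 - f a2 b2| ≤ L * (‖a1 - a2‖ + ‖b1 - b2‖))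
    (hg : ∀ a ∈ A, (g a).Nonempty ∧ Convex ℝ (g a) ∧ IsCompact (g a) ∧ g a ⊆ B)
    (hH : ∀ a1 ∈ A, ∀ a2 ∈ A, Metric.hausdorffDist (g a1) (g a2) ≤ L' * ‖a1 - a2‖) :
    ∀ a1 ∈ A, ∀ a2 ∈ A, ∀ b1 ∈ g a1, ∀ b2 ∈ g a2,
      (∀ b ∈ g a1, f a1 b ≤ f a1 b1) → (∀ b ∈ g a2, f a2 b ≤ f a2 b2) →
      ‖b1 - b2‖ ≤ (L' + 2 * Real.sqrt (4 / μ) * Real.sqrt (L + L * L')) *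
        max (Real.sqrt ‖a1 - a2‖) ‖a1 - a2‖ :=
  robust_berge_argmax_holder_general n m A B f g μ L L' hμ hL hL' hconc hf hg hH
end

section
/- In the game SV(φ, ε) constructed from a 3CNF formula φ with n variables, if φ is satisfiable with satisfying assignment σ, then the strategy profile in which both players play uniformly (each with probability 1/n) the n literals made true by σ is an exact Nash equilibrium in which each player receives expected payoff n − 1. -/
/-! The Schoenebeck–Vadhan game `SV(φ, ε)` built from a 3CNF formula `φ` with `n`
variables and `m` clauses. Strategies are literals (`Fin n × Bool`), clauses (`Fin m`)
and variables (`Fin n`). -/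

/-- A literal: a variable together with its sign. -/
abbrev SVLit (n : ℕ) := Fin n × Bool

/-- A strategy: a literal, a clause, or a variable. -/
abbrev SVStrat (n m : ℕ) := SVLit n ⊕ (Fin m ⊕ Fin n)

/-- The row player's payoff in the symmetric game `SV(φ, ε)`. -/
def SVpayoff (n m : ℕ) (cl : Fin m → Fin 3 → SVLit n) :
    SVStrat n m → SVStrat n m → ℝ
  | Sum.inl l1, Sum.inl l2 =>
      if l2 = (l1.1, !l1.2) then (n : ℝ) - 4 else (n : ℝ) - 1
  | Sum.inr (Sum.inr v), Sum.inl l => if l.1 = v then 0 else (n : ℝ)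
  | Sum.inr (Sum.inl c), Sum.inl l => if ∃ j, cl c j = l then 0 else (n : ℝ)
  | _, Sum.inr _ => (n : ℝ) - 4

/-- If `φ` is satisfiable with satisfying assignment `σ`, then both players playing each
of the `n` literals made true by `σ` uniformly with probability `1/n` is an exact Nash
equilibrium of `SV(φ, ε)` with expected payoff `n − 1` for each player. -/
theorem SV_satisfiable_uniform_nash (n m : ℕ) (hn : 0 < n)
    (cl : Fin m → Fin 3 → SVLit n) (σ : Fin n → Bool)
    (hsat : ∀ c : Fin m, ∃ j : Fin 3, σ (cl c j).1 = (cl c j).2)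
    (p : SVStrat n m → ℝ)
    (hp : ∀ s, p s = match s with
      | Sum.inl l => if l.2 = σ l.1 then (1 : ℝ) / n else 0
      | Sum.inr _ => 0) :
    (∑ s1, ∑ s2, p s1 * p s2 * SVpayoff n m cl s1 s2) = (n : ℝ) - 1 ∧
    (∀ s : SVStrat n m, ∑ s2, p s2 * SVpayoff n m cl s s2 ≤ (n : ℝ) - 1) ∧
    (∀ s : SVStrat n m, ∑ s1, p s1 * SVpayoff n m cl s1 s ≤ (n : ℝ) - 1) := by
  have hn' : (n : ℝ) ≠ 0 := Nat.cast_ne_zero.mpr hn.ne'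
  have hnpos : (0:ℝ) < (n:ℝ) := by positivity
  have key : ∀ f : SVStrat n m → ℝ,
      (∑ s, p s * f s) = (1/n) * ∑ w : Fin n, f (Sum.inl (w, σ w)) := by
    intro f
    rw [Fintype.sum_sum_type]
    have h2 : ∑ s : Fin m ⊕ Fin n, p (Sum.inr s) * f (Sum.inr s) = 0 := by
      apply Finset.sum_eq_zero; intro s _; rw [hp]; simp
    rw [h2, add_zero, Fintype.sum_prod_type, Finset.mul_sum]
    apply Finset.sum_congr rfl
    intro w _
    rw [Fintype.sum_bool]
    simp only [hp]
    cases h : σ w <;> simp [h, mul_comm]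
  have hlit : ∀ (l1 l2 : SVLit n),
      SVpayoff n m cl (Sum.inl l1) (Sum.inl l2) ≤ (n:ℝ) - 1 := by
    intro l1 l2
    simp only [SVpayoff]
    split <;> linarith
  have hEq : ∀ w w' : Fin n,
      SVpayoff n m cl (Sum.inl (w, σ w)) (Sum.inl (w', σ w')) = (n:ℝ) - 1 := by
    intro w w'
    simp only [SVpayoff]
    rw [if_neg]
    intro h
    simp only [Prod.mk.injEq] at h
    obtain ⟨h1, h2⟩ := h
    subst h1
    simp at h2
  have hlitany : ∀ (l1 : SVLit n) (s : SVStrat n m),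
      SVpayoff n m cl (Sum.inl l1) s ≤ (n:ℝ) - 1 := by
    intro l1 s
    cases s with
    | inl l2 => exact hlit l1 l2
    | inr s => simp only [SVpayoff]; linarith
  have hite : ∀ a : Fin n, (∑ w : Fin n, if w = a then (0:ℝ) else (n:ℝ)) = (n:ℝ) * ((n:ℝ) - 1) := by
    intro a
    have : ∀ w : Fin n, (if w = a then (0:ℝ) else (n:ℝ))
        = (n:ℝ) - (if w = a then (n:ℝ) else 0) := by
      intro w; split <;> ring
    simp_rw [this]
    rw [Finset.sum_sub_distrib, Finset.sum_ite_eq' Finset.univ a (fun _ => (n:ℝ))]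
    rw [Finset.sum_const, Finset.card_univ, Fintype.card_fin, nsmul_eq_mul,
      if_pos (Finset.mem_univ a)]
    ring
  refine ⟨?_, ?_, ?_⟩
  · have step : ∀ s1 : SVStrat n m, (∑ s2, p s1 * p s2 * SVpayoff n m cl s1 s2)
        = p s1 * ∑ s2, p s2 * SVpayoff n m cl s1 s2 := by
      intro s1; rw [Finset.mul_sum]; apply Finset.sum_congr rfl; intros; ring
    simp_rw [step]
    rw [key (fun s1 => ∑ s2, p s2 * SVpayoff n m cl s1 s2)]
    have inner : ∀ w : Fin n,
        (∑ s2, p s2 * SVpayoff n m cl (Sum.inl (w, σ w)) s2) = (n:ℝ) - 1 := by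
      intro w
      rw [key]
      rw [Finset.sum_congr rfl (fun w' _ => hEq w w')]
      rw [Finset.sum_const, Finset.card_univ, Fintype.card_fin, nsmul_eq_mul]
      field_simp
    simp_rw [inner]
    rw [Finset.sum_const, Finset.card_univ, Fintype.card_fin, nsmul_eq_mul]
    field_simp
  · intro s
    rw [key (fun s2 => SVpayoff n m cl s s2)]
    match s with
    | Sum.inl l1 =>
        have : (∑ w : Fin n, SVpayoff n m cl (Sum.inl l1) (Sum.inl (w, σ w)))
            ≤ (n:ℝ) * ((n:ℝ) - 1) := by
          calc (∑ w : Fin n, SVpayoff n m cl (Sum.inl l1) (Sum.inl (w, σ w)))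
              ≤ ∑ _w : Fin n, ((n:ℝ) - 1) :=
                Finset.sum_le_sum (fun w _ => hlit l1 (w, σ w))
            _ = (n:ℝ) * ((n:ℝ) - 1) := by
                rw [Finset.sum_const, Finset.card_univ, Fintype.card_fin, nsmul_eq_mul]
        calc (1/(n:ℝ)) * ∑ w : Fin n, SVpayoff n m cl (Sum.inl l1) (Sum.inl (w, σ w))
            ≤ (1/(n:ℝ)) * ((n:ℝ) * ((n:ℝ) - 1)) := by
              apply mul_le_mul_of_nonneg_left this; positivity
          _ = (n:ℝ) - 1 := by field_simp
    | Sum.inr (Sum.inr v) =>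
        have hsum : (∑ w : Fin n, SVpayoff n m cl (Sum.inr (Sum.inr v)) (Sum.inl (w, σ w)))
            ≤ (n:ℝ) * ((n:ℝ) - 1) := by
          have hb : ∀ w : Fin n, SVpayoff n m cl (Sum.inr (Sum.inr v)) (Sum.inl (w, σ w))
              ≤ if w = v then 0 else (n:ℝ) := by
            intro w; simp only [SVpayoff]; exact le_rfl
          calc _ ≤ ∑ w : Fin n, (if w = v then (0:ℝ) else (n:ℝ)) :=
                Finset.sum_le_sum (fun w _ => hb w)
            _ = (n:ℝ) * ((n:ℝ) - 1) := hite v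
        calc (1/(n:ℝ)) * ∑ w : Fin n, SVpayoff n m cl (Sum.inr (Sum.inr v)) (Sum.inl (w, σ w))
            ≤ (1/(n:ℝ)) * ((n:ℝ) * ((n:ℝ) - 1)) := by
              apply mul_le_mul_of_nonneg_left hsum; positivity
          _ = (n:ℝ) - 1 := by field_simp
    | Sum.inr (Sum.inl c) =>
        obtain ⟨j, hj⟩ := hsat c
        set w0 := (cl c j).1 with hw0
        have hsum : (∑ w : Fin n, SVpayoff n m cl (Sum.inr (Sum.inl c)) (Sum.inl (w, σ w)))
            ≤ (n:ℝ) * ((n:ℝ) - 1) := by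
          have hb : ∀ w : Fin n, SVpayoff n m cl (Sum.inr (Sum.inl c)) (Sum.inl (w, σ w))
              ≤ if w = w0 then 0 else (n:ℝ) := by
            intro w
            by_cases hw : w = w0
            · subst hw
              rw [if_pos rfl]
              simp only [SVpayoff]
              rw [if_pos ⟨j, Prod.ext rfl hj.symm⟩]
            · rw [if_neg hw]
              simp only [SVpayoff]
              split
              · exact hnpos.le
              · exact le_rfl
          calc _ ≤ ∑ w : Fin n, (if w = w0 then (0:ℝ) else (n:ℝ)) :=
                Finset.sum_le_sum (fun w _ => hb w)
            _ = (n:ℝ) * ((n:ℝ) - 1) := hite w0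
        calc (1/(n:ℝ)) * ∑ w : Fin n, SVpayoff n m cl (Sum.inr (Sum.inl c)) (Sum.inl (w, σ w))
            ≤ (1/(n:ℝ)) * ((n:ℝ) * ((n:ℝ) - 1)) := by
              apply mul_le_mul_of_nonneg_left hsum; positivity
          _ = (n:ℝ) - 1 := by field_simp
  · intro s
    rw [key (fun s1 => SVpayoff n m cl s1 s)]
    calc (1/(n:ℝ)) * ∑ w : Fin n, SVpayoff n m cl (Sum.inl (w, σ w)) s
        ≤ (1/(n:ℝ)) * ((n:ℝ) * ((n:ℝ) - 1)) := by
          apply mul_le_mul_of_nonneg_left _ (by positivity)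
          calc (∑ w : Fin n, SVpayoff n m cl (Sum.inl (w, σ w)) s)
              ≤ ∑ _w : Fin n, ((n:ℝ) - 1) :=
                Finset.sum_le_sum (fun w _ => hlitany (w, σ w) s)
            _ = (n:ℝ) * ((n:ℝ) - 1) := by
                rw [Finset.sum_const, Finset.card_univ, Fintype.card_fin, nsmul_eq_mul]
      _ = (n:ℝ) - 1 := by field_simp
end
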